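/- Let A be an ordered semiring and let Spec(A) be the set of prime ideals of A, topologized as the subspace of 2^A (Sierpiński space to the power A) via the embedding sending a prime ideal I to the map x ↦ (x ∉ I). Then the map sending a radical ideal J of A to the set U_J = {I ∈ Spec(A) | J ⊈ I} is an order isomorphism (with respect to inclusion) from the set of radical ideals of A onto the lattice of open subsets of Spec(A); in particular it is a bijection, and every open subset of Spec(A) equals U_J for a unique radical ideal J. -/

import Mathlib

universe u v

section Defs

variable {A : Type u} [CommSemiring A] [Preorder A]

/-- The set `⟨S⟩ = {z | ∃ m, ∃ s₁,…,s_m ∈ S, ∃ y₁,…,y_m, z ≤ s₁y₁ + ⋯ + s_m y_m}`,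
the smallest ideal of the ordered semiring `A` containing `S`. -/
def span (S : Set A) : Set A :=
  {z : A | ∃ (m : ℕ) (s y : Fin m → A), (∀ i, s i ∈ S) ∧ z ≤ ∑ i, s i * y i}

/-- `I` is an ideal of the ordered semiring `A`: downward closed, contains `0`,
closed under addition, and absorbing under multiplication. -/
def IsIdeal (I : Set A) : Prop :=
  (∀ ⦃x y : A⦄, x ≤ y → y ∈ I → x ∈ I) ∧ (0 : A) ∈ I ∧
    (∀ ⦃x y : A⦄, x ∈ I → y ∈ I → x + y ∈ I) ∧
    ∀ x y : A, x ∈ I ∨ y ∈ I → x * y ∈ I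

/-- The product `I · J` of two ideals: the ideal generated by `{x * y | x ∈ I, y ∈ J}`. -/
def iprod (I J : Set A) : Set A := span (Set.image2 (· * ·) I J)

/-- The radical `√I = {x | ∃ n ≥ 1, x ^ n ∈ I}` of an ideal `I`. -/
def radical (I : Set A) : Set A := {x : A | ∃ n : ℕ, 1 ≤ n ∧ x ^ n ∈ I}

/-- `I` is a radical ideal of the ordered semiring `A`. -/
def IsRadicalIdeal (I : Set A) : Prop :=
  IsIdeal I ∧ ∀ (x : A) (n : ℕ), 1 ≤ n → x ^ n ∈ I → x ∈ I

/-- `I` is a prime ideal of the ordered semiring `A`. -/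
def IsPrimeIdeal (I : Set A) : Prop :=
  IsIdeal I ∧ (1 : A) ∉ I ∧ ∀ x y : A, x * y ∈ I → x ∈ I ∨ y ∈ I

/-- `I` is a maximal ideal of the ordered semiring `A`. -/
def IsMaximalIdeal (I : Set A) : Prop :=
  IsIdeal I ∧ I ≠ Set.univ ∧ ∀ J : Set A, IsIdeal J → I ⊆ J → J = I ∨ J = Set.univ

end Defs

/-- The spectrum of an ordered semiring: the set of its prime ideals. -/
def PrimeSpec (A : Type u) [CommSemiring A] [Preorder A] : Type u :=
  {I : Set A // IsPrimeIdeal I}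

/-- The prime ideal underlying a point of the spectrum. -/
def PrimeSpec.asIdeal {A : Type u} [CommSemiring A] [Preorder A] (I : PrimeSpec A) :
    Set A :=
  Subtype.val I

/-- The topology on `Spec A`: the subspace topology induced from the product `2 ^ A` of
Sierpiński spaces (`Prop` with its Sierpiński topology) via `I ↦ (x ↦ x ∉ I)`. -/
instance (A : Type u) [CommSemiring A] [Preorder A] : TopologicalSpace (PrimeSpec A) :=
  TopologicalSpace.induced (fun (I : PrimeSpec A) (x : A) => x ∉ I.asIdeal) inferInstance

/-- The frame `Rad A` of radical ideals of `A`, ordered by inclusion. -/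
abbrev RadIdl (A : Type u) [CommSemiring A] [Preorder A] : Type u :=
  {J : Set A // IsRadicalIdeal J}

/-- `p : Rad A → Prop` is a frame homomorphism into the two-element frame `2 = Prop`:
it preserves arbitrary joins (least upper bounds) and finite meets (binary greatest
lower bounds and the top element). -/
def IsFrameHomToTwo {A : Type u} [CommSemiring A] [Preorder A]
    (p : RadIdl A → Prop) : Prop :=
  (∀ (K : Set (RadIdl A)) (s : RadIdl A), IsLUB K s → (p s ↔ ∃ k ∈ K, p k)) ∧
    (∀ a b m : RadIdl A, IsGLB {a, b} m → (p m ↔ p a ∧ p b)) ∧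
    ∀ t : RadIdl A, IsTop t → p t

/-- The space `pt (Rad A)` of points of the frame of radical ideals: frame
homomorphisms `Rad A → 2`, topologized as a subspace of the product `2 ^ Rad A` of
Sierpiński spaces. -/
abbrev RadPt (A : Type u) [CommSemiring A] [Preorder A] : Type u :=
  {p : RadIdl A → Prop // IsFrameHomToTwo p}

section Helpers
variable {A : Type u} [CommSemiring A] [Preorder A]
  [CovariantClass A A (· + ·) (· ≤ ·)] [CovariantClass A A (· * ·) (· ≤ ·)]

lemma my_mul_le_mul {a b c d : A} (h1 : a ≤ b) (h2 : c ≤ d) : a * c ≤ b * d := by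
  calc a * c ≤ a * d := mul_le_mul_right h2 a
    _ = d * a := mul_comm _ _
    _ ≤ d * b := mul_le_mul_right h1 d
    _ = b * d := mul_comm _ _

lemma my_add_le_add {a b c d : A} (h1 : a ≤ b) (h2 : c ≤ d) : a + c ≤ b + d := by
  calc a + c ≤ a + d := add_le_add_right h2 a
    _ = d + a := add_comm _ _
    _ ≤ d + b := add_le_add_right h1 d
    _ = b + d := add_comm _ _

lemma subset_span {S : Set A} : S ⊆ span S := by
  intro x hx
  refine ⟨1, fun _ => x, fun _ => 1, fun _ => hx, by simp⟩

lemma isIdeal_span (S : Set A) : IsIdeal (span S) := by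
  refine ⟨?_, ?_, ?_, ?_⟩
  · rintro x y hxy ⟨m, s, t, hs, hle⟩; exact ⟨m, s, t, hs, hxy.trans hle⟩
  · exact ⟨0, Fin.elim0, Fin.elim0, fun i => i.elim0, by simp⟩
  · rintro x y ⟨m, s, t, hs, hle⟩ ⟨n, s', t', hs', hle'⟩
    refine ⟨m + n, Fin.append s s', Fin.append t t', ?_, ?_⟩
    · intro i
      refine Fin.addCases (fun j => ?_) (fun j => ?_) i
      · rw [Fin.append_left]; exact hs j
      · rw [Fin.append_right]; exact hs' j
    · have : ∑ i : Fin (m + n), Fin.append s s' i * Fin.append t t' i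
          = (∑ i : Fin m, s i * t i) + ∑ i : Fin n, s' i * t' i := by
        rw [Fin.sum_univ_add]
        simp [Fin.append_left, Fin.append_right]
      rw [this]; exact my_add_le_add hle hle'
  · have key : ∀ x y : A, x ∈ span S → x * y ∈ span S := by
      rintro x y ⟨m, s, t, hs, hle⟩
      refine ⟨m, s, fun i => t i * y, hs, ?_⟩
      calc x * y = y * x := mul_comm _ _
        _ ≤ y * ∑ i, s i * t i := mul_le_mul_right hle y
        _ = (∑ i, s i * t i) * y := mul_comm _ _
        _ = ∑ i, s i * t i * y := Finset.sum_mul _ _ _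
        _ = ∑ i, s i * (t i * y) := by simp [mul_assoc]
    rintro x y (hx | hy)
    · exact key x y hx
    · rw [mul_comm]; exact key y x hy

lemma span_subset {S I : Set A} (hI : IsIdeal I) (hSI : S ⊆ I) : span S ⊆ I := by
  rintro z ⟨m, s, t, hs, hle⟩
  refine hI.1 hle ?_
  exact Finset.sum_induction _ (· ∈ I) (fun a b ha hb => hI.2.2.1 ha hb) hI.2.1
    (fun i _ => hI.2.2.2 _ _ (Or.inl (hSI (hs i))))

lemma IsPrimeIdeal.isRadical {I : Set A} (hI : IsPrimeIdeal I) :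
    ∀ (x : A) (n : ℕ), 1 ≤ n → x ^ n ∈ I → x ∈ I := by
  intro x n
  induction n with
  | zero => omega
  | succ k ih =>
    intro _ h
    rcases Nat.eq_zero_or_pos k with h1 | h1
    · subst h1; rwa [pow_one] at h
    · rw [pow_succ] at h
      rcases hI.2.2 _ _ h with h' | h'
      · exact ih h1 h'
      · exact h'

end Helpers

section Sep
variable {A : Type u} [CommSemiring A] [Preorder A]
  [CovariantClass A A (· + ·) (· ≤ ·)] [CovariantClass A A (· * ·) (· ≤ ·)]

lemma mem_span_union_singleton {P : Set A} (hP : IsIdeal P) {a z : A}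
    (hz : z ∈ span (P ∪ {a})) : ∃ p ∈ P, ∃ u, z ≤ p + a * u := by
  classical
  obtain ⟨m, s, t, hs, hle⟩ := hz
  refine ⟨∑ i ∈ Finset.univ.filter (fun i => s i ∈ P), s i * t i, ?_,
    ∑ i ∈ Finset.univ.filter (fun i => ¬ s i ∈ P), t i, ?_⟩
  · exact Finset.sum_induction _ (· ∈ P) (fun a b ha hb => hP.2.2.1 ha hb) hP.2.1
      (fun i hi => hP.2.2.2 _ _ (Or.inl (Finset.mem_filter.mp hi).2))
  · have h2 : ∑ i ∈ Finset.univ.filter (fun i => ¬ s i ∈ P), s i * t i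
        = a * ∑ i ∈ Finset.univ.filter (fun i => ¬ s i ∈ P), t i := by
      rw [Finset.mul_sum]
      refine Finset.sum_congr rfl (fun i hi => ?_)
      have := (Finset.mem_filter.mp hi).2
      rcases hs i with h | h
      · exact absurd h this
      · rw [Set.mem_singleton_iff.mp h]
    rw [← h2, Finset.sum_filter_add_sum_filter_not]
    exact hle

lemma exists_prime_sep {J : Set A} (hJ : IsRadicalIdeal J) {x : A} (hx : x ∉ J) :
    ∃ P : Set A, IsPrimeIdeal P ∧ J ⊆ P ∧ x ∉ P := by
  classical
  set S : Set (Set A) := {I | IsIdeal I ∧ J ⊆ I ∧ ∀ n : ℕ, 1 ≤ n → x ^ n ∉ I} with hS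
  have hJS : J ∈ S := ⟨hJ.1, subset_rfl, fun n hn h => hx (hJ.2 x n hn h)⟩
  have chainH : ∀ c ⊆ S, IsChain (· ⊆ ·) c → c.Nonempty → ∃ ub ∈ S, ∀ s ∈ c, s ⊆ ub := by
    rintro c hcS hchain ⟨I0, hI0⟩
    refine ⟨⋃₀ c, ⟨⟨?_, ?_, ?_, ?_⟩, ?_, ?_⟩, fun s hs => Set.subset_sUnion_of_mem hs⟩
    · rintro u v huv ⟨I, hIc, hvI⟩; exact ⟨I, hIc, (hcS hIc).1.1 huv hvI⟩
    · exact ⟨I0, hI0, (hcS hI0).1.2.1⟩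
    · rintro u v ⟨I, hIc, huI⟩ ⟨I', hI'c, hvI'⟩
      rcases hchain.total hIc hI'c with h | h
      · exact ⟨I', hI'c, (hcS hI'c).1.2.2.1 (h huI) hvI'⟩
      · exact ⟨I, hIc, (hcS hIc).1.2.2.1 huI (h hvI')⟩
    · rintro u v (⟨I, hIc, huI⟩ | ⟨I, hIc, hvI⟩)
      · exact ⟨I, hIc, (hcS hIc).1.2.2.2 u v (Or.inl huI)⟩
      · exact ⟨I, hIc, (hcS hIc).1.2.2.2 u v (Or.inr hvI)⟩
    · exact Set.subset_sUnion_of_mem hI0 |>.trans' (hcS hI0).2.1 |>.trans (by rfl)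
    · rintro n hn ⟨I, hIc, hmem⟩; exact (hcS hIc).2.2 n hn hmem
  obtain ⟨P, hJP, hPmax⟩ := zorn_subset_nonempty S chainH J hJS
  have hPS : P ∈ S := hPmax.1
  have hxP : x ∉ P := fun h => hPS.2.2 1 le_rfl (by rwa [pow_one])
  -- key step: if a ∉ P then some power of x lies in span (P ∪ {a})
  have key : ∀ a : A, a ∉ P → ∃ (n : ℕ) (p : A) (u : A),
      1 ≤ n ∧ p ∈ P ∧ x ^ n ≤ p + a * u := by
    intro a haP
    have hQ : span (P ∪ {a}) ∉ S := by
      intro hQS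
      have : span (P ∪ {a}) ⊆ P :=
        hPmax.2 hQS (subset_trans Set.subset_union_left subset_span)
      exact haP (this (subset_span (Or.inr rfl)))
    have hQideal : IsIdeal (span (P ∪ {a})) := isIdeal_span _
    have hJQ : J ⊆ span (P ∪ {a}) :=
      subset_trans hPS.2.1 (subset_trans Set.subset_union_left subset_span)
    have : ¬ ∀ n : ℕ, 1 ≤ n → x ^ n ∉ span (P ∪ {a}) := fun h => hQ ⟨hQideal, hJQ, h⟩
    push_neg at this
    obtain ⟨n, hn, hmem⟩ := this
    obtain ⟨p, hp, u, hle⟩ := mem_span_union_singleton hPS.1 hmem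
    exact ⟨n, p, u, hn, hp, hle⟩
  refine ⟨P, ⟨hPS.1, ?_, ?_⟩, hPS.2.1, hxP⟩
  · intro h1
    exact hxP (by simpa using hPS.1.2.2.2 x 1 (Or.inr h1))
  · intro a b hab
    by_contra hcon
    push_neg at hcon
    obtain ⟨m, p, u, hm, hp, hleu⟩ := key a hcon.1
    obtain ⟨n, q, v, hn, hq, hlev⟩ := key b hcon.2
    have hle : x ^ (m + n) ≤ (p + a * u) * (q + b * v) := by
      rw [pow_add]; exact my_mul_le_mul hleu hlev
    have hexp : (p + a * u) * (q + b * v)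
        = p * q + p * (b * v) + q * (a * u) + (a * b) * (u * v) := by ring
    have hmemP : (p + a * u) * (q + b * v) ∈ P := by
      rw [hexp]
      have hI := hPS.1
      exact hI.2.2.1 (hI.2.2.1 (hI.2.2.1 (hI.2.2.2 _ _ (Or.inl hp))
        (hI.2.2.2 _ _ (Or.inl hp))) (hI.2.2.2 _ _ (Or.inl hq)))
        (hI.2.2.2 _ _ (Or.inl hab))
    exact hPS.2.2 (m + n) (by omega) (hPS.1.1 hle hmemP)
end Sep

section Topo
variable {A : Type u} [CommSemiring A] [Preorder A]

lemma sier_up {t : Set Prop} (ht : IsOpen t) {p q : Prop} (hpq : p → q) (hp : p ∈ t) : q ∈ t := by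
  have ht' : TopologicalSpace.GenerateOpen {{True}} t := ht
  clear ht
  induction ht' with
  | basic s hs =>
    rw [Set.mem_singleton_iff.mp hs] at hp ⊢
    have : p = True := hp
    exact eq_true (hpq (this ▸ trivial))
  | univ => trivial
  | inter s u hs hu ihs ihu => exact ⟨ihs hp.1, ihu hp.2⟩
  | sUnion C _ ihC =>
    obtain ⟨s, hsC, hps⟩ := hp
    exact ⟨s, hsC, ihC s hsC hps⟩

def Dopen (x : A) : Set (PrimeSpec A) := {I | x ∉ I.asIdeal}

lemma isOpen_D (x : A) : IsOpen (Dopen (A := A) x) := by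
  rw [isOpen_induced_iff]
  refine ⟨(fun f : A → Prop => f x) ⁻¹' {p | p}, ?_, rfl⟩
  refine (continuous_apply x).isOpen_preimage _ ?_
  have : {p : Prop | p} = {True} := by
    ext p; simp [eq_iff_iff]
  rw [this]; exact isOpen_singleton_true

lemma prime_prod_not_mem {I : PrimeSpec A} {s : Finset A} (h : ∀ a ∈ s, a ∉ I.asIdeal) :
    (∏ a ∈ s, a) ∉ I.asIdeal := by
  refine Finset.prod_induction _ (· ∉ I.asIdeal) ?_ I.2.2.1 h
  intro a b ha hb hab
  rcases I.2.2.2 a b hab with h' | h'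
  exacts [ha h', hb h']

lemma prime_prod_mem {I : PrimeSpec A} {s : Finset A} {a : A} (ha : a ∈ s)
    (h : a ∈ I.asIdeal) : (∏ b ∈ s, b) ∈ I.asIdeal := by
  classical
  rw [← Finset.mul_prod_erase s _ ha]
  exact I.2.1.2.2.2 _ _ (Or.inl h)

lemma exists_basic {U : Set (PrimeSpec A)} (hU : IsOpen U) {I : PrimeSpec A} (hI : I ∈ U) :
    ∃ y : A, y ∉ I.asIdeal ∧ Dopen y ⊆ U := by
  classical
  rw [isOpen_induced_iff] at hU
  obtain ⟨V, hV, hpre⟩ := hU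
  have hIV : (fun x : A => x ∉ I.asIdeal) ∈ V := by rw [← hpre] at hI; exact hI
  obtain ⟨F, t, h1, h2⟩ := isOpen_pi_iff.mp hV _ hIV
  refine ⟨∏ a ∈ F.filter (fun a => a ∉ I.asIdeal), a, ?_, ?_⟩
  · exact prime_prod_not_mem (fun a ha => (Finset.mem_filter.mp ha).2)
  · intro I' hI'
    have himp : ∀ a ∈ F, (a ∉ I.asIdeal → a ∉ I'.asIdeal) := by
      intro a haF haI haI'
      exact hI' (prime_prod_mem (Finset.mem_filter.mpr ⟨haF, haI⟩) haI')
    have : (fun x : A => x ∉ I'.asIdeal) ∈ (↑F : Set A).pi t := by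
      intro a haF
      exact sier_up (h1 a haF).1 (himp a haF) (h1 a haF).2
    rw [← hpre]
    exact h2 this
end Topo

section Main
variable {A : Type u} [CommSemiring A] [Preorder A]
  [CovariantClass A A (· + ·) (· ≤ ·)] [CovariantClass A A (· * ·) (· ≤ ·)]

def gIdeal (U : Set (PrimeSpec A)) : Set A :=
  {x | ∀ I : PrimeSpec A, x ∉ I.asIdeal → I ∈ U}

lemma gIdeal_radical (U : Set (PrimeSpec A)) : IsRadicalIdeal (gIdeal U) := by
  refine ⟨⟨?_, ?_, ?_, ?_⟩, ?_⟩
  · intro x y hxy hy I hxI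
    exact hy I (fun hyI => hxI (I.2.1.1 hxy hyI))
  · intro I h0; exact absurd I.2.1.2.1 h0
  · intro x y hx hy I hI
    by_cases hxI : x ∈ I.asIdeal
    · by_cases hyI : y ∈ I.asIdeal
      · exact absurd (I.2.1.2.2.1 hxI hyI) hI
      · exact hy I hyI
    · exact hx I hxI
  · rintro x y (hx | hy) <;> intro I hI
    · exact hx I (fun h => hI (I.2.1.2.2.2 x y (Or.inl h)))
    · exact hy I (fun h => hI (I.2.1.2.2.2 x y (Or.inr h)))
  · intro x n hn hxn I hxI
    exact hxn I (fun h => hxI (IsPrimeIdeal.isRadical I.2 x n hn h))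

lemma fSet_eq (J : Set A) :
    {I : PrimeSpec A | ¬ J ⊆ I.asIdeal} = ⋃ x ∈ J, Dopen (A := A) x := by
  ext I
  simp only [Set.mem_setOf_eq, Set.not_subset, Set.mem_iUnion, Dopen]
  exact exists_congr fun a => by tauto

lemma isOpen_fSet (J : Set A) : IsOpen {I : PrimeSpec A | ¬ J ⊆ I.asIdeal} := by
  rw [fSet_eq]
  exact isOpen_biUnion (fun x _ => isOpen_D x)

theorem stmt19_aux :
    ∃ e : RadIdl A ≃o TopologicalSpace.Opens (PrimeSpec A),
      ∀ J : RadIdl A,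
        (e J : Set (PrimeSpec A)) = {I : PrimeSpec A | ¬J.val ⊆ I.asIdeal} := by
  have leftinv : ∀ J : RadIdl A, gIdeal {I : PrimeSpec A | ¬J.val ⊆ I.asIdeal} = J.val := by
    intro J
    ext x
    constructor
    · intro hx
      by_contra hxJ
      obtain ⟨P, hP, hJP, hxP⟩ := exists_prime_sep J.2 hxJ
      exact hx ⟨P, hP⟩ hxP hJP
    · intro hxJ I hxI hJI
      exact hxI (hJI hxJ)
  have rightinv : ∀ U : TopologicalSpace.Opens (PrimeSpec A),
      {I : PrimeSpec A | ¬ gIdeal (U : Set (PrimeSpec A)) ⊆ I.asIdeal} = (U : Set (PrimeSpec A)) := by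
    intro U
    ext I
    simp only [Set.mem_setOf_eq, Set.not_subset]
    constructor
    · rintro ⟨x, hxg, hxI⟩
      exact hxg I hxI
    · intro hIU
      obtain ⟨y, hyI, hyU⟩ := exists_basic U.2 hIU
      exact ⟨y, fun I' hI' => hyU hI', hyI⟩
  refine ⟨{
    toFun := fun J => ⟨{I : PrimeSpec A | ¬J.val ⊆ I.asIdeal}, isOpen_fSet J.val⟩
    invFun := fun U => ⟨gIdeal (U : Set (PrimeSpec A)), gIdeal_radical _⟩
    left_inv := fun J => Subtype.ext (leftinv J)
    right_inv := fun U => TopologicalSpace.Opens.ext (rightinv U)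
    map_rel_iff' := ?_ }, fun J => rfl⟩
  intro J₁ J₂
  constructor
  · intro h
    have hg : gIdeal {I : PrimeSpec A | ¬J₁.val ⊆ I.asIdeal}
        ⊆ gIdeal {I : PrimeSpec A | ¬J₂.val ⊆ I.asIdeal} := by
      intro x hx I hxI
      exact h (hx I hxI)
    rw [leftinv J₁, leftinv J₂] at hg
    exact hg
  · intro h I hI
    exact fun hsub => hI (fun x hx => hsub (h hx))
end Main


/-- the map `J ↦ U_J = {I ∈ Spec A | J ⊈ I}` is an order isomorphism
from the radical ideals of `A` (ordered by inclusion) onto the lattice of open subsets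
of `Spec A`. -/
theorem stmt19 {A : Type u} [CommSemiring A] [Preorder A]
    [CovariantClass A A (· + ·) (· ≤ ·)] [CovariantClass A A (· * ·) (· ≤ ·)] :
    ∃ e : RadIdl A ≃o TopologicalSpace.Opens (PrimeSpec A),
      ∀ J : RadIdl A,
        (e J : Set (PrimeSpec A)) = {I : PrimeSpec A | ¬J.val ⊆ I.asIdeal} := by
  exact stmt19_aux
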